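/- arXiv:2104.10495 — 2 statements merged into one kernel-verified Lean document; each statement's English description precedes it below -/
import Mathlib

section
/- Fix integers d ≥ 1 and t ≥ 1 with d ≤ N. The set H_{d,t} of non-empty compact subsets K ⊆ ℝ^N containing an affinely dependent set of d+1 points whose pairwise distances are all at least 1/t is closed and nowhere dense in the hyperspace K(ℝ^N) with the Hausdorff metric. -/
/-!
Closedness: affine dependence and `1/t`-separation are closed conditions on `(d+1)`-tuples, and a
tuple lying in a compact set `K'` near `K` can be moved by at most `dist K' K` into `K`; by
compactness of `Kᵈ⁺¹` the moved tuples converge along a subsequence, and the limit is a tuple in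
`K` that still satisfies both conditions.

Nowhere density: every compact set is Hausdorff-close to a finite set in general position, i.e. one
in which any `d + 1` distinct points are affinely independent. Such a set is built point by point
from a finite net: at most `d` points span a proper affine subspace (as `d ≤ N`), so the
complement of the finitely many spans to avoid is open and dense. A `1/t`-separated tuple in it
is injective, hence affinely independent.
-/

open Metric Set Filter Topology TopologicalSpace Module Finset

namespace TopologicalSpace.NonemptyCompacts

variable {α : Type*} [MetricSpace α]

theorem exists_mem_dist_le {K L : NonemptyCompacts α} {x : α} (hx : x ∈ K) :
    ∃ y ∈ L, dist x y ≤ dist K L := by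
  obtain ⟨y, hyL, hy⟩ := L.isCompact.exists_infDist_eq_dist L.nonempty x
  refine ⟨y, hyL, hy ▸ infDist_le_hausdorffDist_of_mem hx ?_⟩
  exact hausdorffEDist_ne_top_of_nonempty_of_bounded K.nonempty L.nonempty
    K.isCompact.isBounded L.isCompact.isBounded

theorem isClosed_setOf_exists_forall_mem {ι : Type*} [Fintype ι] {P : Set (ι → α)}
    (hP : IsClosed P) :
    IsClosed {K : NonemptyCompacts α | ∃ A : ι → α, (∀ i, A i ∈ (K : Set α)) ∧ A ∈ P} := by
  refine IsSeqClosed.isClosed fun Ks K hKs hlim => ?_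
  choose A hAK hAP using hKs
  have hB : ∀ n, ∃ B : ι → α, (∀ i, B i ∈ (K : Set α)) ∧ dist (A n) B ≤ dist (Ks n) K := by
    intro n
    choose B hBK hB using fun i => exists_mem_dist_le (L := K) (hAK n i)
    exact ⟨B, hBK, (dist_pi_le_iff dist_nonneg).2 hB⟩
  choose B hBK hAB using hB
  obtain ⟨B₀, hB₀K, φ, hφ, hBφ⟩ :=
    (isCompact_univ_pi fun _ => K.isCompact).tendsto_subseq fun n i _ => hBK n i
  have hAB₀ : Tendsto (fun n => dist (B (φ n)) (A (φ n))) atTop (𝓝 0) := by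
    refine squeeze_zero (fun _ => dist_nonneg) (fun n => ?_)
      ((tendsto_iff_dist_tendsto_zero.1 hlim).comp hφ.tendsto_atTop)
    rw [dist_comm]
    exact hAB (φ n)
  exact ⟨B₀, fun i => hB₀K i trivial, hP.mem_of_tendsto (tendsto_of_tendsto_of_dist hBφ hAB₀)
    (Eventually.of_forall fun n => hAP (φ n))⟩

end TopologicalSpace.NonemptyCompacts

theorem isClosed_setOf_pairwise_le_dist {ι α : Type*} [PseudoMetricSpace α] (r : ℝ) :
    IsClosed {A : ι → α | ∀ i j, i ≠ j → r ≤ dist (A i) (A j)} := by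
  simp only [ofPred_forall]
  exact isClosed_iInter fun i => isClosed_iInter fun j => isClosed_iInter fun _ =>
    isClosed_le continuous_const (by fun_prop)

section GeneralPosition

variable (k : Type*) {V P : Type*} [DivisionRing k] [AddCommGroup V] [Module k V] [AddTorsor V P]

def GeneralPosition (n : ℕ) (S : Set P) : Prop :=
  ∀ s : Finset P, (s : Set P) ⊆ S → #s ≤ n → AffineIndependent k ((↑) : s → P)

variable {k}

theorem generalPosition_empty (n : ℕ) : GeneralPosition k n (∅ : Set P) := by
  intro s hs _
  rw [Set.subset_empty_iff, coe_eq_empty] at hs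
  subst hs
  exact affineIndependent_of_subsingleton k ((↑) : ↥(∅ : Finset P) → P)

theorem AffineIndependent.insert_of_notMem_affineSpan {s : Set P}
    (hs : AffineIndependent k ((↑) : s → P)) {p : P} (hp : p ∉ affineSpan k s) :
    AffineIndependent k ((↑) : ↥(insert p s) → P) := by
  let i : ↥(insert p s) := ⟨p, mem_insert p s⟩
  have hne : ∀ x : {y : ↥(insert p s) // y ≠ i}, ((x : ↥(insert p s)) : P) ∈ s := by
    rintro ⟨⟨y, rfl | hy⟩, hne⟩
    · exact (hne rfl).elim
    · exact hy
  refine AffineIndependent.affineIndependent_of_notMem_span (i := i) ?_ fun hmem => hp ?_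
  · exact hs.comp_embedding ⟨fun x => ⟨_, hne x⟩, fun x y h => by
      simpa [Subtype.ext_iff] using h⟩
  · refine affineSpan_mono k ?_ hmem
    rintro _ ⟨x, hx, rfl⟩
    exact hne ⟨x, hx⟩

theorem GeneralPosition.insert {n : ℕ} {S : Set P} (hS : GeneralPosition k (n + 1) S) {p : P}
    (hp : ∀ s : Finset P, (s : Set P) ⊆ S → #s ≤ n → p ∉ affineSpan k (s : Set P)) :
    GeneralPosition k (n + 1) (insert p S) := by
  classical
  intro s hsS hcard
  by_cases hps : p ∈ s
  · have hsub : ((s.erase p : Finset P) : Set P) ⊆ S := fun x hx =>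
      (hsS (mem_of_mem_erase hx)).resolve_left (ne_of_mem_erase hx)
    have hcard' : #(s.erase p) ≤ n := by rw [card_erase_of_mem hps]; omega
    have h := (hS _ hsub (by omega)).insert_of_notMem_affineSpan (hp _ hsub hcard')
    rwa [← coe_insert, insert_erase hps] at h
  · exact hS s (fun x hx => (hsS hx).resolve_left (ne_of_mem_of_not_mem hx hps)) hcard

theorem GeneralPosition.affineIndependent {n : ℕ} {S : Set P} (hS : GeneralPosition k n S)
    {ι : Type*} [Fintype ι] {p : ι → P} (hp : Function.Injective p) (hι : Fintype.card ι ≤ n)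
    (hpS : ∀ i, p i ∈ S) : AffineIndependent k p := by
  classical
  have h := hS (univ.image p) (by simpa [Set.range_subset_iff])
    (by rwa [card_image_of_injective _ hp, card_univ])
  exact h.comp_embedding ⟨fun i => ⟨p i, mem_image_of_mem p (mem_univ i)⟩, fun i j hij =>
    hp (congrArg Subtype.val hij)⟩

end GeneralPosition

theorem affineSpan_ne_top_of_card_le_finrank {k V P : Type*} [DivisionRing k] [AddCommGroup V]
    [Module k V] [AddTorsor V P] {s : Finset P} (hs : #s ≤ finrank k V) :
    affineSpan k (s : Set P) ≠ ⊤ := by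
  intro h
  rcases s.eq_empty_or_nonempty with rfl | hne
  · simp at h
  · have : Nonempty s := hne.to_subtype
    have htop : vectorSpan k (Set.range ((↑) : s → P)) = ⊤ := by
      simpa using AffineSubspace.vectorSpan_eq_top_of_affineSpan_eq_top k V P h
    have hdim := finrank_vectorSpan_range_add_one_le k ((↑) : s → P)
    rw [htop, finrank_top, Fintype.card_coe] at hdim
    omega

variable {E : Type*} [NormedAddCommGroup E] [NormedSpace ℝ E] [FiniteDimensional ℝ E]

theorem AffineSubspace.dense_compl {s : AffineSubspace ℝ E} (hs : s ≠ ⊤) :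
    Dense (s : Set E)ᶜ := by
  refine interior_eq_empty_iff_dense_compl.1 (Set.not_nonempty_iff_eq_empty.1 fun h => hs ?_)
  simpa using s.convex.interior_nonempty_iff_affineSpan_eq_top.1 h

theorem dense_setOf_notMem_affineSpan {n : ℕ} (hn : n ≤ finrank ℝ E) (F : Finset E) :
    Dense {x : E | ∀ s : Finset E, (s : Set E) ⊆ F → #s ≤ n → x ∉ affineSpan ℝ (s : Set E)} := by
  have hF : {x : E | ∀ s : Finset E, (s : Set E) ⊆ F → #s ≤ n → x ∉ affineSpan ℝ (s : Set E)} =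
      ⋂ s ∈ {s ∈ F.powerset | #s ≤ n}, (affineSpan ℝ (s : Set E) : Set E)ᶜ := by
    ext
    simp [and_imp]
  rw [hF]
  exact dense_biInter_of_isOpen
    (fun s _ => (AffineSubspace.closed_of_finiteDimensional _).isOpen_compl)
    (Finset.countable_toSet _)
    fun s hs => AffineSubspace.dense_compl (affineSpan_ne_top_of_card_le_finrank
      ((mem_filter.1 hs).2.trans hn))

theorem Finset.exists_generalPosition_near {n : ℕ} (hn : n ≤ finrank ℝ E) (F : Finset E) {δ : ℝ}
    (hδ : 0 < δ) :
    ∃ F' : Finset E, GeneralPosition ℝ (n + 1) (F' : Set E) ∧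
      (∀ x ∈ F, ∃ y ∈ F', dist x y < δ) ∧ ∀ y ∈ F', ∃ x ∈ F, dist x y < δ := by
  classical
  induction F using Finset.induction_on with
  | empty =>
    exact ⟨∅, by simpa using generalPosition_empty (k := ℝ) (P := E) (n + 1), by simp, by simp⟩
  | insert a F _ ih =>
    obtain ⟨F', hF', hFF', hF'F⟩ := ih
    obtain ⟨a', ha'span, ha'⟩ :=
      (dense_setOf_notMem_affineSpan hn F').exists_mem_open isOpen_ball ⟨a, mem_ball_self hδ⟩
    refine ⟨insert a' F', by simpa only [coe_insert] using hF'.insert ha'span, ?_, ?_⟩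
    · simp only [mem_insert, forall_eq_or_imp, exists_eq_or_imp]
      exact ⟨Or.inl (mem_ball'.1 ha'), fun x hx => Or.inr (hFF' x hx)⟩
    · simp only [mem_insert, forall_eq_or_imp, exists_eq_or_imp]
      exact ⟨Or.inl (mem_ball'.1 ha'), fun y hy => Or.inr (hF'F y hy)⟩

theorem TopologicalSpace.NonemptyCompacts.dense_setOf_generalPosition {n : ℕ}
    (hn : n ≤ finrank ℝ E) :
    Dense {K : NonemptyCompacts E | GeneralPosition ℝ (n + 1) (K : Set E)} := by
  refine Metric.dense_iff.2 fun K ε hε => ?_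
  have hδ : 0 < ε / 3 := by positivity
  obtain ⟨T, hTK, hT, hKT⟩ := K.isCompact.finite_cover_balls hδ
  obtain ⟨F', hF', hTF', hF'T⟩ := hT.toFinset.exists_generalPosition_near hn hδ
  have hF'ne : (F' : Set E).Nonempty := by
    obtain ⟨x, hx⟩ := K.nonempty
    obtain ⟨c, hc, -⟩ := mem_iUnion₂.1 (hKT hx)
    obtain ⟨y, hy, -⟩ := hTF' c (hT.mem_toFinset.2 hc)
    exact ⟨y, hy⟩
  refine ⟨⟨⟨F', F'.finite_toSet.isCompact⟩, hF'ne⟩, ?_, hF'⟩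
  rw [mem_ball, Metric.NonemptyCompacts.dist_eq]
  refine (hausdorffDist_le_of_mem_dist (r := 2 * (ε / 3)) (by positivity) (fun y hy => ?_)
    fun x hx => ?_).trans_lt (by linarith)
  · obtain ⟨c, hc, hcy⟩ := hF'T y hy
    exact ⟨c, hTK (hT.mem_toFinset.1 hc), by rw [dist_comm]; linarith⟩
  · obtain ⟨c, hc, hxc⟩ := mem_iUnion₂.1 (hKT hx)
    obtain ⟨y, hy, hcy⟩ := hTF' c (hT.mem_toFinset.2 hc)
    exact ⟨y, hy, by linarith [dist_triangle x c y, mem_ball.1 hxc]⟩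

theorem stmt7_general (N d t : ℕ) (ht : 1 ≤ t) (hdN : d ≤ N) :
    IsClosed {K : NonemptyCompacts (EuclideanSpace ℝ (Fin N)) |
      ∃ A : Fin (d + 1) → EuclideanSpace ℝ (Fin N),
        (∀ m, A m ∈ (K : Set (EuclideanSpace ℝ (Fin N)))) ∧ ¬ AffineIndependent ℝ A ∧
        ∀ m m', m ≠ m' → (1 : ℝ) / t ≤ dist (A m) (A m')} ∧
    IsNowhereDense {K : NonemptyCompacts (EuclideanSpace ℝ (Fin N)) |
      ∃ A : Fin (d + 1) → EuclideanSpace ℝ (Fin N),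
        (∀ m, A m ∈ (K : Set (EuclideanSpace ℝ (Fin N)))) ∧ ¬ AffineIndependent ℝ A ∧
        ∀ m m', m ≠ m' → (1 : ℝ) / t ≤ dist (A m) (A m')} := by
  have hP : IsClosed {A : Fin (d + 1) → EuclideanSpace ℝ (Fin N) | ¬ AffineIndependent ℝ A ∧
      ∀ m m', m ≠ m' → (1 : ℝ) / t ≤ dist (A m) (A m')} :=
    isOpen_setOfPred_affineIndependent.isClosed_compl.inter (isClosed_setOf_pairwise_le_dist _)
  have hclosed := NonemptyCompacts.isClosed_setOf_exists_forall_mem hP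
  refine ⟨hclosed, hclosed.isNowhereDense_iff.2 <| interior_eq_empty_iff_dense_compl.2 <|
    (NonemptyCompacts.dense_setOf_generalPosition (n := d) (by simpa using hdN)).mono ?_⟩
  rintro K hK ⟨A, hAK, hdep, hsep⟩
  have ht' : (0 : ℝ) < 1 / t := one_div_pos.2 (by exact_mod_cast ht)
  refine hdep (hK.affineIndependent (fun m m' h => ?_) (by simp) hAK)
  by_contra hne
  have hdist := hsep m m' hne
  rw [h, dist_self] at hdist
  linarith

theorem stmt7 (N d t : ℕ) (hd : 1 ≤ d) (ht : 1 ≤ t) (hdN : d ≤ N) :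
    IsClosed {K : NonemptyCompacts (EuclideanSpace ℝ (Fin N)) |
      ∃ A : Fin (d + 1) → EuclideanSpace ℝ (Fin N),
        (∀ m, A m ∈ (K : Set (EuclideanSpace ℝ (Fin N)))) ∧ ¬ AffineIndependent ℝ A ∧
        ∀ m m', m ≠ m' → (1 : ℝ) / t ≤ dist (A m) (A m')} ∧
    IsNowhereDense {K : NonemptyCompacts (EuclideanSpace ℝ (Fin N)) |
      ∃ A : Fin (d + 1) → EuclideanSpace ℝ (Fin N),
        (∀ m, A m ∈ (K : Set (EuclideanSpace ℝ (Fin N)))) ∧ ¬ AffineIndependent ℝ A ∧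
        ∀ m m', m ≠ m' → (1 : ℝ) / t ≤ dist (A m) (A m')} :=
  stmt7_general N d t ht hdN
end

section
/- Let M ⊆ ℝ^N be a set such that for every admissible array (k; s; i₁,…,i_s) (0 < k < N, s ≥ 1, all i_j ≥ 2, ∑(i_j−1) ≥ k+1) no tuple of pairwise distinct points of M has its difference vectors spanning a subspace of dimension ≤ k. Then for every linear subspace H with 0 < dim H = κ < N, the non-degenerate fibers F₁,…,F_σ of the orthogonal projection p_H restricted to M satisfy ∑_{j=1}^σ (|F_j| − 1) ≤ κ. -/
/-!
Two points of one fiber of `p_H` differ by a vector of `H`, and distinct fibers are disjoint.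
Enumerating the points of the non-degenerate fibers therefore gives a tuple of pairwise distinct
points of `M` whose difference vectors lie in `H`, so they span a subspace of dimension `≤ κ`; the
hypothesis with `k = κ` then forces `∑ (|F_j| - 1) ≤ κ`. The same bound, applied to `κ + 2` points
of one fiber or to `κ + 1` non-degenerate fibers, shows that every fiber is finite and that there
are only finitely many non-degenerate ones.
-/

noncomputable def projFiber {N : ℕ} (H : Submodule ℝ (EuclideanSpace ℝ (Fin N)))
    (M : Set (EuclideanSpace ℝ (Fin N))) (A : EuclideanSpace ℝ (Fin N)) :
    Set (EuclideanSpace ℝ (Fin N)) :=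
  {B ∈ M | Hᗮ.orthogonalProjectionOnto B = Hᗮ.orthogonalProjectionOnto A}

/-- The hypothesis on `M`; the paper's base point `Aʲ₁` of the `j`-th block is `A j 0`. -/
def NoLowRankAdmissibleTuple (N : ℕ) (M : Set (EuclideanSpace ℝ (Fin N))) : Prop :=
  ∀ (k s : ℕ) (i : Fin s → ℕ), ∀ (_ : 0 < k) (_ : k < N) (_ : 1 ≤ s)
      (hi : ∀ j, 2 ≤ i j) (_ : k + 1 ≤ ∑ j, (i j - 1)),
      ¬ ∃ A : (j : Fin s) → Fin (i j) → EuclideanSpace ℝ (Fin N),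
        (∀ j m, A j m ∈ M) ∧
        Function.Injective (fun p : Σ j : Fin s, Fin (i j) => A p.1 p.2) ∧
        Module.finrank ℝ (Submodule.span ℝ
          {v | ∃ (j : Fin s) (m : Fin (i j)), m ≠ (⟨0, zero_lt_two.trans_le (hi j)⟩ : Fin (i j)) ∧
            v = A j m - A j ⟨0, zero_lt_two.trans_le (hi j)⟩}) ≤ k

section

open Function

variable {N : ℕ} {M : Set (EuclideanSpace ℝ (Fin N))} {H : Submodule ℝ (EuclideanSpace ℝ (Fin N))}

theorem projFiber_subset (A : EuclideanSpace ℝ (Fin N)) : projFiber H M A ⊆ M :=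
  fun _ hB => hB.1

theorem sub_mem_of_mem_projFiber {A B C : EuclideanSpace ℝ (Fin N)}
    (hB : B ∈ projFiber H M A) (hC : C ∈ projFiber H M A) : B - C ∈ H := by
  have hproj : Hᗮ.orthogonalProjectionOnto (B - C) = 0 := by
    rw [map_sub, hB.2, hC.2, sub_self]
  rwa [Submodule.orthogonalProjectionOnto_eq_zero_iff, Submodule.orthogonal_orthogonal] at hproj

theorem projFiber_eq_of_mem {A B : EuclideanSpace ℝ (Fin N)} (hB : B ∈ projFiber H M A) :
    projFiber H M B = projFiber H M A := by
  ext C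
  simp only [projFiber, Set.mem_sep_iff, hB.2]

theorem pairwiseDisjoint_projFiber :
    {F | ∃ A, F = projFiber H M A}.PairwiseDisjoint id := by
  rintro _ ⟨A, rfl⟩ _ ⟨A', rfl⟩ hne
  refine Set.disjoint_left.2 fun C hC hC' => hne ?_
  rw [← projFiber_eq_of_mem hC, projFiber_eq_of_mem hC']

theorem sum_card_sub_one_le_of_forall_sub_mem (hM : NoLowRankAdmissibleTuple N M) {k s : ℕ}
    (hk0 : 0 < k) (hkN : k < N) (hH : Module.finrank ℝ H ≤ k)
    (t : Fin s → Finset (EuclideanSpace ℝ (Fin N))) (htM : ∀ j, ↑(t j) ⊆ M)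
    (ht2 : ∀ j, 2 ≤ (t j).card) (hdisj : Pairwise (Disjoint on t))
    (htH : ∀ j, ∀ x ∈ t j, ∀ y ∈ t j, x - y ∈ H) :
    ∑ j, ((t j).card - 1) ≤ k := by
  by_contra! hsum
  have hs : 1 ≤ s := Nat.pos_of_ne_zero fun hs0 => by subst hs0; simp at hsum
  let B : (j : Fin s) → Fin (t j).card → EuclideanSpace ℝ (Fin N) :=
    fun j m => (t j).equivFin.symm m
  have hBt : ∀ j m, B j m ∈ t j := fun j m => ((t j).equivFin.symm m).2
  refine hM k s (fun j => (t j).card) hk0 hkN hs ht2 hsum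
    ⟨B, fun j m => htM j (hBt j m), ?_, ?_⟩
  · rintro ⟨j, m⟩ ⟨j', m'⟩ (h : B j m = B j' m')
    obtain rfl : j = j' := by
      by_contra hne
      exact Finset.disjoint_left.1 (hdisj hne) (hBt j m) (h ▸ hBt j' m')
    simpa using (t j).equivFin.symm.injective (Subtype.ext h)
  · refine (Submodule.finrank_mono ?_).trans hH
    rw [Submodule.span_le]
    rintro _ ⟨j, m, -, rfl⟩
    exact htH j _ (hBt j m) _ (hBt j _)

theorem sum_ncard_sub_one_le_of_forall_sub_mem (hM : NoLowRankAdmissibleTuple N M) {k : ℕ}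
    (hk0 : 0 < k) (hkN : k < N) (hH : Module.finrank ℝ H ≤ k)
    (𝒮 : Finset (Set (EuclideanSpace ℝ (Fin N)))) (h𝒮M : ∀ F ∈ 𝒮, F ⊆ M)
    (h𝒮fin : ∀ F ∈ 𝒮, F.Finite)
    (hdisj : (𝒮 : Set (Set (EuclideanSpace ℝ (Fin N)))).PairwiseDisjoint id)
    (h𝒮H : ∀ F ∈ 𝒮, ∀ x ∈ F, ∀ y ∈ F, x - y ∈ H) :
    ∑ F ∈ 𝒮, (F.ncard - 1) ≤ k := by
  classical
  set 𝒯 := 𝒮.filter fun F => 2 ≤ F.ncard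
  have h𝒯 : ∑ F ∈ 𝒯, (F.ncard - 1) = ∑ F ∈ 𝒮, (F.ncard - 1) :=
    Finset.sum_filter_of_ne fun F _ h => by omega
  let e : Fin 𝒯.card ≃ 𝒯 := 𝒯.equivFin.symm
  have he𝒮 : ∀ j, (e j : Set (EuclideanSpace ℝ (Fin N))) ∈ 𝒮 := fun j =>
    (Finset.mem_filter.1 (e j).2).1
  let t j := (h𝒮fin _ (he𝒮 j)).toFinset
  have htcard : ∀ j, (t j).card = (e j : Set (EuclideanSpace ℝ (Fin N))).ncard := fun j =>
    (Set.ncard_eq_toFinset_card _ _).symm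
  calc ∑ F ∈ 𝒮, (F.ncard - 1) = ∑ j, ((t j).card - 1) := by
        rw [← h𝒯, ← Finset.sum_coe_sort, ← e.sum_comp]
        simp only [htcard]
    _ ≤ k := by
      refine sum_card_sub_one_le_of_forall_sub_mem hM hk0 hkN hH t
        (fun j => by simpa [t] using h𝒮M _ (he𝒮 j))
        (fun j => htcard j ▸ (Finset.mem_filter.1 (e j).2).2) (fun j j' hne => ?_)
        (fun j => by simpa [t] using h𝒮H _ (he𝒮 j))
      refine (Set.Finite.disjoint_toFinset).2 (hdisj (he𝒮 j) (he𝒮 j') fun h => hne ?_)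
      exact e.injective (Subtype.ext h)

theorem projFiber_finite (hM : NoLowRankAdmissibleTuple N M) {k : ℕ}
    (hk0 : 0 < k) (hkN : k < N) (hH : Module.finrank ℝ H ≤ k) (A : EuclideanSpace ℝ (Fin N)) :
    (projFiber H M A).Finite := by
  by_contra hinf
  obtain ⟨u, hu, hcard⟩ := Set.Infinite.exists_subset_card_eq hinf (k + 2)
  have hle := sum_ncard_sub_one_le_of_forall_sub_mem hM hk0 hkN hH {(u : Set _)}
    (by simpa using hu.trans (projFiber_subset A)) (by simp) (by simp)
    (by
      simp only [Finset.mem_singleton, forall_eq]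
      exact fun x hx y hy => sub_mem_of_mem_projFiber (hu hx) (hu hy))
  simp [hcard] at hle

theorem sum_ncard_projFiber_sub_one_le (hM : NoLowRankAdmissibleTuple N M) {k : ℕ}
    (hk0 : 0 < k) (hkN : k < N) (hH : Module.finrank ℝ H ≤ k)
    (𝒮 : Finset (Set (EuclideanSpace ℝ (Fin N)))) (h𝒮 : ∀ F ∈ 𝒮, ∃ A, F = projFiber H M A) :
    ∑ F ∈ 𝒮, (F.ncard - 1) ≤ k := by
  refine sum_ncard_sub_one_le_of_forall_sub_mem hM hk0 hkN hH 𝒮 ?_ ?_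
    (pairwiseDisjoint_projFiber.subset fun F hF => h𝒮 F hF) ?_
  · rintro F hF
    obtain ⟨A, rfl⟩ := h𝒮 F hF
    exact projFiber_subset A
  · rintro F hF
    obtain ⟨A, rfl⟩ := h𝒮 F hF
    exact projFiber_finite hM hk0 hkN hH A
  · rintro F hF x hx y hy
    obtain ⟨A, rfl⟩ := h𝒮 F hF
    exact sub_mem_of_mem_projFiber hx hy

end

theorem stmt19 (N : ℕ) (M : Set (EuclideanSpace ℝ (Fin N)))
    (hyp : ∀ (k s : ℕ) (i : Fin s → ℕ), ∀ (_ : 0 < k) (_ : k < N) (_ : 1 ≤ s)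
      (hi : ∀ j, 2 ≤ i j) (_ : k + 1 ≤ ∑ j, (i j - 1)),
      ¬ ∃ A : (j : Fin s) → Fin (i j) → EuclideanSpace ℝ (Fin N),
        (∀ j m, A j m ∈ M) ∧
        Function.Injective (fun p : Σ j : Fin s, Fin (i j) => A p.1 p.2) ∧
        Module.finrank ℝ (Submodule.span ℝ
          {v | ∃ (j : Fin s) (m : Fin (i j)), m ≠ (⟨0, by have := hi j; omega⟩ : Fin (i j)) ∧
            v = A j m - A j ⟨0, by have := hi j; omega⟩}) ≤ k) :
    ∀ (H : Submodule ℝ (EuclideanSpace ℝ (Fin N))) (κ : ℕ),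
      Module.finrank ℝ H = κ → 0 < κ → κ < N →
      {F : Set (EuclideanSpace ℝ (Fin N)) | ∃ A ∈ M, F = projFiber H M A ∧ F.Nontrivial}.Finite ∧
      ∀ 𝒮 : Finset (Set (EuclideanSpace ℝ (Fin N))),
        (∀ F ∈ 𝒮, ∃ A ∈ M, F = projFiber H M A ∧ F.Nontrivial) →
        ∑ F ∈ 𝒮, (F.ncard - 1) ≤ κ := by
  intro H κ hκ hκ0 hκN
  have hbound : ∀ 𝒮 : Finset (Set (EuclideanSpace ℝ (Fin N))),
      (∀ F ∈ 𝒮, ∃ A ∈ M, F = projFiber H M A ∧ F.Nontrivial) → ∑ F ∈ 𝒮, (F.ncard - 1) ≤ κ :=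
    fun 𝒮 h𝒮 => sum_ncard_projFiber_sub_one_le hyp hκ0 hκN hκ.le 𝒮 fun F hF =>
      let ⟨A, _, hFA, _⟩ := h𝒮 F hF; ⟨A, hFA⟩
  refine ⟨Set.not_infinite.1 fun hinf => ?_, hbound⟩
  obtain ⟨𝒮, h𝒮, hcard⟩ := hinf.exists_subset_card_eq (κ + 1)
  have hone : ∀ F ∈ 𝒮, 1 ≤ F.ncard - 1 := fun F hF => by
    obtain ⟨A, -, rfl, hnt⟩ := h𝒮 hF
    have := Set.one_lt_ncard_iff_nontrivial_and_finite.2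
      ⟨hnt, projFiber_finite hyp hκ0 hκN hκ.le A⟩
    omega
  have := (Finset.card_nsmul_le_sum 𝒮 _ 1 hone).trans (hbound 𝒮 fun F hF => h𝒮 hF)
  simp [hcard] at this
end
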